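/- arXiv:2602.00988 — 3 statements merged into one kernel-verified Lean document; each statement's English description precedes it below -/
import Mathlib

section
/- Let a, b, μ be natural numbers with a < μ < b, let K > 1 be a real number, and let p : [0,∞) → (ℕ → ℝ) be such that p(t) ∈ V_μ for all t ≥ 0, each component t ↦ p_n(t) is differentiable with p_n′(t) = L[p(t)]_n, the series y(t) := ∑_{n≥0} Kⁿ·p_n(t) converges for every t ≥ 0 with y(0) < ∞, and y is differentiable with y′(t) = ∑_{n≥0} Kⁿ·L[p(t)]_n. Then for all t ≥ 0, y(t) ≤ max{ (K^{b+1} + K^a)/(1 − μ/b), y(0) }. -/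
/-!
Write `y = ∑ Kⁿ pₙ`. Summing `Kⁿ L[p]ₙ` by parts, the givers' moves contribute
`-λ_r (1 - K⁻¹) ∑_{n > a} Kⁿ pₙ` and the receivers' moves `λ_g (K - 1) ∑_{n < b} Kⁿ pₙ`.
Since `∑_{n ≤ a} Kⁿ pₙ ≤ Kᵃ`, `∑_{n < b} Kⁿ pₙ ≤ K^(b-1) λ_r` and `λ_g ≤ 1`, this gives
`y' ≤ λ_r (1 - K⁻¹) (Kᵇ + Kᵃ - y)`. So `y'` is nonpositive as soon as `y ≥ Kᵇ + Kᵃ`, and `y` never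
exceeds `max (Kᵇ + Kᵃ) (y 0)`, which is at most the stated bound because `0 < 1 - μ / b ≤ 1`.
-/

open scoped BigOperators

/-- `lamr b p = ∑_{ℓ=0}^{b-1} p_ℓ`, the proportion of receivers. -/
noncomputable def lamr (b : ℕ) (p : ℕ → ℝ) : ℝ := ∑ ℓ ∈ Finset.range b, p ℓ

/-- `lamg a p = ∑_{ℓ≥a+1} p_ℓ`, the proportion of givers. -/
noncomputable def lamg (a : ℕ) (p : ℕ → ℝ) : ℝ := ∑' ℓ : ℕ, if a + 1 ≤ ℓ then p ℓ else 0

/-- The mean-field operator `L[p]_n`. -/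
noncomputable def Lop (a b : ℕ) (p : ℕ → ℝ) (n : ℕ) : ℝ :=
  lamr b p * ((if a ≤ n then p (n + 1) else 0) - (if a + 1 ≤ n then p n else 0))
    + lamg a p * ((if 1 ≤ n ∧ n ≤ b then p (n - 1) else 0) - (if n ≤ b - 1 then p n else 0))

/-- `V_μ`: probability mass functions on ℕ with mean `μ`. -/
def memV (μ : ℕ) (p : ℕ → ℝ) : Prop :=
  (∀ n, 0 ≤ p n) ∧ HasSum p 1 ∧ HasSum (fun n : ℕ => (n : ℝ) * p n) (μ : ℝ)

open Finset Set Filter Topology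

theorem le_max_of_hasDerivWithinAt_nonpos_of_le {f f' : ℝ → ℝ} {a C : ℝ}
    (hf : ∀ x, a ≤ x → HasDerivWithinAt f (f' x) (Ici a) x)
    (hf' : ∀ x, a ≤ x → C ≤ f x → f' x ≤ 0) :
    ∀ t, a ≤ t → f t ≤ max C (f a) := by
  intro t ht
  set M := max C (f a)
  have hslack : ∀ r > 0, f t ≤ M + r * (t - a) := fun r hr => by
    refine image_le_of_deriv_right_lt_deriv_boundary' (f' := f') (B := fun x => M + r * (x - a))
      (B' := fun _ => r) (fun x hx => (hf x hx.1).continuousWithinAt.mono Icc_subset_Ici_self)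
      (fun x hx => (hf x hx.1).mono (Ici_subset_Ici.2 hx.1)) (by simp [M]) (by fun_prop)
      (fun x _ => ?_) (fun x hx hfx => ?_) ⟨ht, le_rfl⟩
    · simpa using (((hasDerivWithinAt_id x _).sub_const a).const_mul r).const_add M
    · have hM : M ≤ f x := hfx ▸ le_add_of_nonneg_right (mul_nonneg hr.le (sub_nonneg.2 hx.1))
      exact (hf' x hx.1 ((le_max_left _ _).trans hM)).trans_lt hr
  have hlim : Tendsto (fun r => M + r * (t - a)) (𝓝[>] 0) (𝓝 M) :=
    tendsto_nhdsWithin_of_tendsto_nhds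
      ((by fun_prop : Continuous fun r : ℝ => M + r * (t - a)).tendsto' 0 M (by simp))
  exact ge_of_tendsto hlim (eventually_nhdsWithin_of_forall hslack)

theorem Summable.ite_le {α : Type*} [UniformSpace α] [AddCommGroup α] [IsUniformAddGroup α]
    [CompleteSpace α] {f : ℕ → α} (hf : Summable f) (m : ℕ) :
    Summable fun n => if m ≤ n then f n else 0 :=
  (hf.indicator {n | m ≤ n}).congr fun n => by simp [Set.indicator_apply]

section ExponentialMoment

variable {a b : ℕ} {K : ℝ} {q : ℕ → ℝ}

theorem hasSum_pow_mul_giver (hK : K ≠ 0) (hs : Summable fun n => K ^ n * q n) :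
    HasSum (fun n => K ^ n * ((if a ≤ n then q (n + 1) else 0) - (if a + 1 ≤ n then q n else 0)))
      (-(1 - K⁻¹) * ∑' n, if a + 1 ≤ n then K ^ n * q n else 0) := by
  have htail := (hs.ite_le (a + 1)).hasSum
  have htail_shift := (hasSum_nat_add_iff' 1).2 htail
  simp only [range_one, sum_singleton, Nat.le_zero, Nat.add_one_ne_zero, if_false, sub_zero]
    at htail_shift
  have hterm : ∀ n, K ^ n * ((if a ≤ n then q (n + 1) else 0) - (if a + 1 ≤ n then q n else 0))
      = K⁻¹ * (if a + 1 ≤ n + 1 then K ^ (n + 1) * q (n + 1) else 0)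
        - (if a + 1 ≤ n then K ^ n * q n else 0) := by
    intro n
    split_ifs <;> first | omega | (field_simp; ring)
  rw [funext hterm, show ∀ x : ℝ, -(1 - K⁻¹) * x = K⁻¹ * x - x from fun x => by ring]
  exact (htail_shift.mul_left K⁻¹).sub htail

theorem hasSum_pow_mul_receiver (hb : 1 ≤ b) (K : ℝ) (q : ℕ → ℝ) :
    HasSum (fun n => K ^ n *
        ((if 1 ≤ n ∧ n ≤ b then q (n - 1) else 0) - (if n ≤ b - 1 then q n else 0)))
      ((K - 1) * ∑ n ∈ range b, K ^ n * q n) := by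
  convert hasSum_sum_of_ne_finset_zero (L := SummationFilter.unconditional ℕ) (s := range (b + 1))
    (fun n hn => ?_) using 1
  · have hin : ∑ n ∈ range (b + 1), K ^ n * (if 1 ≤ n ∧ n ≤ b then q (n - 1) else 0)
        = ∑ n ∈ range b, K ^ (n + 1) * q n := by
      rw [sum_range_succ']
      simp only [Nat.le_zero, Nat.one_ne_zero, false_and, if_false, mul_zero, add_zero]
      exact sum_congr rfl fun n hn => by
        rw [if_pos (by simp only [Finset.mem_range] at hn; omega), Nat.add_sub_cancel]
    have hout : ∑ n ∈ range (b + 1), K ^ n * (if n ≤ b - 1 then q n else 0)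
        = ∑ n ∈ range b, K ^ n * q n := by
      rw [sum_range_succ, if_neg (by omega), mul_zero, add_zero]
      exact sum_congr rfl fun n hn => by rw [if_pos (by simp only [Finset.mem_range] at hn; omega)]
    simp only [mul_sub, sum_sub_distrib, hin, hout, sub_mul, one_mul, mul_sum]
    congr 1
    exact sum_congr rfl fun n _ => by ring
  · simp only [Finset.mem_range, not_lt] at hn
    rw [if_neg (by omega), if_neg (by omega), sub_zero, mul_zero]

theorem tsum_pow_mul_Lop (hb : 1 ≤ b) (hK : K ≠ 0) (hs : Summable fun n => K ^ n * q n) :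
    ∑' n, K ^ n * Lop a b q n
      = lamg a q * ((K - 1) * ∑ n ∈ range b, K ^ n * q n)
        - lamr b q * ((1 - K⁻¹) * ∑' n, if a + 1 ≤ n then K ^ n * q n else 0) := by
  have hterm : ∀ n, K ^ n * Lop a b q n
      = lamr b q * (K ^ n * ((if a ≤ n then q (n + 1) else 0) - (if a + 1 ≤ n then q n else 0)))
        + lamg a q * (K ^ n *
          ((if 1 ≤ n ∧ n ≤ b then q (n - 1) else 0) - (if n ≤ b - 1 then q n else 0))) := by
    intro n
    unfold Lop
    ring
  rw [tsum_congr hterm]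
  refine HasSum.tsum_eq ?_
  rw [show ∀ x y z w : ℝ, x * y - z * ((1 - K⁻¹) * w) = z * (-(1 - K⁻¹) * w) + x * y from
    fun _ _ _ _ => by ring]
  exact ((hasSum_pow_mul_giver hK hs).mul_left _).add ((hasSum_pow_mul_receiver hb K q).mul_left _)

theorem lamr_nonneg (hq : ∀ n, 0 ≤ q n) : 0 ≤ lamr b q :=
  sum_nonneg fun n _ => hq n

theorem lamg_le_one (hq : ∀ n, 0 ≤ q n) (hq1 : HasSum q 1) : lamg a q ≤ 1 := by
  rw [lamg, ← hq1.tsum_eq]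
  refine Summable.tsum_le_tsum (fun n => ?_) (hq1.summable.ite_le _) hq1.summable
  split_ifs
  exacts [le_rfl, hq n]

theorem sum_range_pow_mul_le (hK : 1 ≤ K) (hq : ∀ n, 0 ≤ q n) :
    ∑ n ∈ range b, K ^ n * q n ≤ K ^ (b - 1) * lamr b q := by
  rw [lamr, mul_sum]
  exact sum_le_sum fun n hn => mul_le_mul_of_nonneg_right
    (pow_le_pow_right₀ hK (by simp only [Finset.mem_range] at hn; omega)) (hq n)

theorem tsum_pow_mul_le_add_tail (hK : 1 ≤ K) (hq : ∀ n, 0 ≤ q n) (hq1 : HasSum q 1)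
    (hs : Summable fun n => K ^ n * q n) :
    ∑' n, K ^ n * q n ≤ K ^ a + ∑' n, if a + 1 ≤ n then K ^ n * q n else 0 := by
  have hterm : ∀ n, K ^ n * q n ≤ K ^ a * q n + if a + 1 ≤ n then K ^ n * q n else 0 := by
    intro n
    split_ifs with h
    · exact le_add_of_nonneg_left (mul_nonneg (pow_nonneg (by linarith) a) (hq n))
    · simpa using mul_le_mul_of_nonneg_right (pow_le_pow_right₀ hK (by omega : n ≤ a)) (hq n)
  simpa using hasSum_le hterm hs.hasSum ((hq1.mul_left (K ^ a)).add (hs.ite_le (a + 1)).hasSum)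

theorem tsum_pow_mul_Lop_le (hb : 1 ≤ b) (hK : 1 < K) (hq : ∀ n, 0 ≤ q n) (hq1 : HasSum q 1)
    (hs : Summable fun n => K ^ n * q n) :
    ∑' n, K ^ n * Lop a b q n ≤ lamr b q * (1 - K⁻¹) * (K ^ b + K ^ a - ∑' n, K ^ n * q n) := by
  have hK0 : 0 < K := by linarith
  rw [tsum_pow_mul_Lop hb hK0.ne' hs]
  have hT := sum_range_pow_mul_le (b := b) hK.le hq
  have hT0 : 0 ≤ ∑ n ∈ range b, K ^ n * q n :=
    sum_nonneg fun n _ => mul_nonneg (pow_nonneg hK0.le n) (hq n)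
  have hV := tsum_pow_mul_le_add_tail (a := a) hK.le hq hq1 hs
  have hlg := lamg_le_one (a := a) hq hq1
  have hlr := lamr_nonneg (b := b) hq
  have hc : 0 ≤ 1 - K⁻¹ := sub_nonneg.2 (inv_le_one_of_one_le₀ hK.le)
  have hKb : (K - 1) * K ^ (b - 1) = (1 - K⁻¹) * K ^ b := by
    rw [show b = b - 1 + 1 by omega, pow_succ, Nat.add_sub_cancel]
    field_simp
  calc lamg a q * ((K - 1) * ∑ n ∈ range b, K ^ n * q n)
        - lamr b q * ((1 - K⁻¹) * ∑' n, if a + 1 ≤ n then K ^ n * q n else 0)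
      ≤ (K - 1) * (K ^ (b - 1) * lamr b q)
        - lamr b q * ((1 - K⁻¹) * (∑' n, K ^ n * q n - K ^ a)) := by
        gcongr ?_ - lamr b q * ((1 - K⁻¹) * ?_)
        · calc lamg a q * ((K - 1) * ∑ n ∈ range b, K ^ n * q n)
              ≤ 1 * ((K - 1) * ∑ n ∈ range b, K ^ n * q n) := by
                gcongr
            _ ≤ (K - 1) * (K ^ (b - 1) * lamr b q) := by
                rw [one_mul]
                gcongr
        · linarith
    _ = lamr b q * (1 - K⁻¹) * (K ^ b + K ^ a - ∑' n, K ^ n * q n) := by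
        rw [← mul_assoc, hKb]
        ring

end ExponentialMoment

theorem uniform_exponential_moment_bound_general (a b μ : ℕ) (hub : μ < b)
    (K : ℝ) (hK : 1 < K) (p : ℝ → ℕ → ℝ)
    (hV : ∀ t : ℝ, 0 ≤ t → memV μ (p t))
    (hsum : ∀ t : ℝ, 0 ≤ t → Summable (fun n : ℕ => K ^ n * p t n))
    (hy : ∀ t : ℝ, 0 ≤ t →
      HasDerivWithinAt (fun s => ∑' n : ℕ, K ^ n * p s n)
        (∑' n : ℕ, K ^ n * Lop a b (p t) n) (Set.Ici (0 : ℝ)) t) :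
    ∀ t : ℝ, 0 ≤ t →
      (∑' n : ℕ, K ^ n * p t n) ≤
        max ((K ^ (b + 1) + K ^ a) / (1 - (μ : ℝ) / b)) (∑' n : ℕ, K ^ n * p 0 n) := by
  intro t ht
  have hb : 1 ≤ b := by omega
  have hμb : (μ : ℝ) / b < 1 := (div_lt_one (by positivity)).2 (by exact_mod_cast hub)
  have hC : K ^ b + K ^ a ≤ (K ^ (b + 1) + K ^ a) / (1 - (μ : ℝ) / b) := by
    refine le_trans ?_ (le_div_self (by positivity) (by linarith) (sub_le_self _ (by positivity)))
    gcongr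
    · exact hK.le
    · omega
  refine (le_max_of_hasDerivWithinAt_nonpos_of_le hy (fun x hx hCx => ?_) t ht).trans
    (max_le_max_right _ hC)
  obtain ⟨hq, hq1, -⟩ := hV x hx
  refine (tsum_pow_mul_Lop_le hb hK hq hq1 (hsum x hx)).trans
    (mul_nonpos_of_nonneg_of_nonpos (mul_nonneg (lamr_nonneg hq) ?_) (by linarith))
  exact sub_nonneg.2 (inv_le_one_of_one_le₀ hK.le)

theorem uniform_exponential_moment_bound (a b μ : ℕ) (hau : a < μ) (hub : μ < b)
    (K : ℝ) (hK : 1 < K) (p : ℝ → ℕ → ℝ)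
    (hV : ∀ t : ℝ, 0 ≤ t → memV μ (p t))
    (hODE : ∀ n : ℕ, ∀ t : ℝ, 0 ≤ t →
      HasDerivWithinAt (fun s => p s n) (Lop a b (p t) n) (Set.Ici (0 : ℝ)) t)
    (hsum : ∀ t : ℝ, 0 ≤ t → Summable (fun n : ℕ => K ^ n * p t n))
    (hy : ∀ t : ℝ, 0 ≤ t →
      HasDerivWithinAt (fun s => ∑' n : ℕ, K ^ n * p s n)
        (∑' n : ℕ, K ^ n * Lop a b (p t) n) (Set.Ici (0 : ℝ)) t) :
    ∀ t : ℝ, 0 ≤ t →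
      (∑' n : ℕ, K ^ n * p t n) ≤
        max ((K ^ (b + 1) + K ^ a) / (1 - (μ : ℝ) / b)) (∑' n : ℕ, K ^ n * p 0 n) :=
  uniform_exponential_moment_bound_general a b μ hub K hK p hV hsum hy
end

section
/- Let a, b, μ be natural numbers with a < μ < b, let K > 1 be a real number, and let p ∈ V_μ satisfy ∑_{n≥0} Kⁿ·p_n < ∞. Then the series ∑_{n≥0} Kⁿ·L[p]_n converges and satisfies ∑_{n≥0} Kⁿ·L[p]_n ≤ (K−1)·K^b + (1 − 1/K)·K^a − (1 − μ/b)·(1 − 1/K)·∑_{n≥0} Kⁿ·p_n. -/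
open scoped BigOperators

/-!
Multiplying `L[p]_n` by `Kⁿ` and summing, the index shifts `n + 1` and `n - 1` become factors
`K⁻¹` and `K`, so the series equals `λ_r (K⁻¹ - 1) ∑_{n>a} Kⁿ p_n + λ_g (K - 1) ∑_{n<b} Kⁿ p_n`.
The second term is at most `(K - 1) K^b` because `λ_g ≤ 1`. In the first, Markov's inequality
gives `λ_r ≥ 1 - μ/b`, and the tail `∑_{n>a} Kⁿ p_n` misses at most `K^a` of `∑ Kⁿ p_n`.
-/

open Finset

theorem hasSum_ite_le_of_hasSum_nat_add {G : Type*} [AddCommGroup G] [TopologicalSpace G]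
    [IsTopologicalAddGroup G] {f : ℕ → G} {k : ℕ} {s : G}
    (h : HasSum (fun n => f (n + k)) s) : HasSum (fun n => if k ≤ n then f n else 0) s := by
  rw [← hasSum_nat_add_iff' k, sum_eq_zero fun n hn => if_neg (by simpa using hn), sub_zero]
  simpa using h

theorem hasSum_ite_lt {M : Type*} [AddCommMonoid M] [TopologicalSpace M] (f : ℕ → M) (m : ℕ) :
    HasSum (fun n => if n < m then f n else 0) (∑ n ∈ range m, f n) := by
  have hsupp : ∀ n ∉ range m, (if n < m then f n else 0) = 0 := fun n hn =>
    if_neg (by simpa using hn)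
  have h : HasSum _ _ := hasSum_sum_of_ne_finset_zero hsupp
  rwa [sum_congr rfl fun n hn => if_pos (by simpa using hn)] at h

section

variable {p : ℕ → ℝ}

theorem hasSum_pow_mul_Lop {a b : ℕ} {K : ℝ} (hK : K ≠ 0) (hb : 0 < b)
    (hsum : Summable fun n => K ^ n * p n) :
    HasSum (fun n => K ^ n * Lop a b p n)
      (lamr b p * ((K⁻¹ - 1) * ∑' n, K ^ (n + (a + 1)) * p (n + (a + 1)))
        + lamg a p * ((K - 1) * ∑ n ∈ range b, K ^ n * p n)) := by
  set A := ∑' n, K ^ (n + (a + 1)) * p (n + (a + 1))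
  set B := ∑ n ∈ range b, K ^ n * p n
  have hA_tail : HasSum (fun n => K ^ (n + (a + 1)) * p (n + (a + 1))) A :=
    ((summable_nat_add_iff (a + 1)).2 hsum).hasSum
  have hA : HasSum (fun n => if a + 1 ≤ n then K ^ n * p n else 0) A :=
    hasSum_ite_le_of_hasSum_nat_add hA_tail
  have hA_shift : HasSum (fun n => if a ≤ n then K ^ n * p (n + 1) else 0) (K⁻¹ * A) :=
    hasSum_ite_le_of_hasSum_nat_add <| (hA_tail.mul_left K⁻¹).congr_fun fun n => by
      rw [← add_assoc, pow_succ, mul_comm _ K, mul_assoc, inv_mul_cancel_left₀ hK]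
  have hB : HasSum (fun n => if n ≤ b - 1 then K ^ n * p n else 0) B :=
    (hasSum_ite_lt _ b).congr_fun fun n => by simp only [Nat.le_sub_one_iff_lt hb]
  have hB_shift : HasSum (fun n => if 1 ≤ n ∧ n ≤ b then K ^ n * p (n - 1) else 0) (K * B) := by
    rw [← hasSum_nat_add_iff' 1, sum_range_one, if_neg (by omega), sub_zero]
    refine ((hasSum_ite_lt _ b).mul_left K).congr_fun fun n => ?_
    rw [mul_ite, mul_zero, Nat.add_sub_cancel]
    exact if_congr (by omega) (by ring) rfl
  rw [show lamr b p * ((K⁻¹ - 1) * A) + lamg a p * ((K - 1) * B)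
      = lamr b p * (K⁻¹ * A - A) + lamg a p * (K * B - B) by ring]
  refine (((hA_shift.sub hA).mul_left _).add ((hB_shift.sub hB).mul_left _)).congr_fun fun n => ?_
  simp only [Lop]
  split_ifs <;> ring
theorem sum_range_pow_mul_le_s11 {K : ℝ} (hK : 1 ≤ K) (hp0 : ∀ n, 0 ≤ p n) (hp1 : HasSum p 1)
    {m N : ℕ} (hmN : m ≤ N + 1) : ∑ n ∈ range m, K ^ n * p n ≤ K ^ N :=
  calc ∑ n ∈ range m, K ^ n * p n ≤ ∑ n ∈ range m, K ^ N * p n :=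
        sum_le_sum fun n hn => mul_le_mul_of_nonneg_right
          (pow_le_pow_right₀ hK (by rw [mem_range] at hn; omega)) (hp0 n)
    _ = K ^ N * ∑ n ∈ range m, p n := by rw [mul_sum]
    _ ≤ K ^ N * 1 := mul_le_mul_of_nonneg_left (sum_le_hasSum _ (fun n _ => hp0 n) hp1)
        (pow_nonneg (by linarith) N)
    _ = K ^ N := mul_one _

theorem lamg_le_one_s11 (a : ℕ) (hp0 : ∀ n, 0 ≤ p n) (hp1 : HasSum p 1) : lamg a p ≤ 1 :=
  tsum_le_of_sum_le' zero_le_one fun s =>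
    (sum_le_sum fun n _ => by split_ifs <;> simp [hp0 n]).trans
      (sum_le_hasSum s (fun n _ => hp0 n) hp1)

theorem one_sub_div_le_lamr {μ b : ℕ} (hb : 0 < b) (hp0 : ∀ n, 0 ≤ p n) (hp1 : HasSum p 1)
    (hmean : HasSum (fun n : ℕ => (n : ℝ) * p n) μ) : 1 - (μ : ℝ) / b ≤ lamr b p := by
  have hb' : (0 : ℝ) < b := by exact_mod_cast hb
  have hle : ∀ n, p n ≤ (if n < b then p n else 0) + n * p n / b := by
    intro n
    split_ifs with h
    · have := div_nonneg (mul_nonneg n.cast_nonneg (hp0 n)) hb'.le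
      linarith
    · rw [zero_add, le_div_iff₀ hb', mul_comm]
      exact mul_le_mul_of_nonneg_right (mod_cast not_lt.1 h : (b : ℝ) ≤ n) (hp0 n)
  have := hasSum_le hle hp1 ((hasSum_ite_lt p b).add (hmean.div_const b))
  rw [lamr]
  linarith

theorem lamg_mul_head_sum_le {K : ℝ} (a b : ℕ) (hK : 1 ≤ K) (hp0 : ∀ n, 0 ≤ p n)
    (hp1 : HasSum p 1) :
    lamg a p * ((K - 1) * ∑ n ∈ range b, K ^ n * p n) ≤ (K - 1) * K ^ b :=
  calc lamg a p * ((K - 1) * ∑ n ∈ range b, K ^ n * p n)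
      ≤ (K - 1) * ∑ n ∈ range b, K ^ n * p n :=
        mul_le_of_le_one_left (mul_nonneg (by linarith) (sum_nonneg fun n _ =>
          mul_nonneg (pow_nonneg (by linarith) n) (hp0 n))) (lamg_le_one_s11 a hp0 hp1)
    _ ≤ (K - 1) * K ^ b :=
        mul_le_mul_of_nonneg_left (sum_range_pow_mul_le_s11 hK hp0 hp1 b.le_succ) (by linarith)

theorem lamr_mul_tail_tsum_le {μ a b : ℕ} {K : ℝ} (hK : 1 < K) (hb : 0 < b) (hp0 : ∀ n, 0 ≤ p n)
    (hp1 : HasSum p 1) (hmean : HasSum (fun n : ℕ => (n : ℝ) * p n) μ)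
    (hsum : Summable fun n => K ^ n * p n) :
    lamr b p * ((K⁻¹ - 1) * ∑' n, K ^ (n + (a + 1)) * p (n + (a + 1))) ≤
      (1 - 1 / K) * K ^ a - (1 - (μ : ℝ) / b) * (1 - 1 / K) * ∑' n, K ^ n * p n := by
  rw [← hsum.sum_add_tsum_nat_add (a + 1), one_div]
  set A := ∑' n, K ^ (n + (a + 1)) * p (n + (a + 1))
  set C := ∑ n ∈ range (a + 1), K ^ n * p n
  have hq0 : ∀ n, 0 ≤ K ^ n * p n := fun n => mul_nonneg (pow_nonneg (by linarith) n) (hp0 n)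
  have hc : 0 ≤ 1 - K⁻¹ := sub_nonneg.2 (inv_le_one_of_one_le₀ hK.le)
  have hA0 : 0 ≤ A := tsum_nonneg fun n => hq0 _
  have hreceive : lamr b p * ((K⁻¹ - 1) * A) ≤ -((1 - μ / b) * (1 - K⁻¹) * A) := by
    have := mul_le_mul_of_nonneg_right (one_sub_div_le_lamr hb hp0 hp1 hmean) (mul_nonneg hc hA0)
    linarith
  have hhead : (1 - (μ : ℝ) / b) * C ≤ K ^ a :=
    (mul_le_of_le_one_left (sum_nonneg fun n _ => hq0 n) (sub_le_self 1 (by positivity))).trans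
      (sum_range_pow_mul_le_s11 hK.le hp0 hp1 le_rfl)
  linarith [mul_le_mul_of_nonneg_left hhead hc]

end

theorem exponential_moment_derivative_bound_general (a b μ : ℕ) (hub : μ < b)
    (K : ℝ) (hK : 1 < K) (p : ℕ → ℝ) (hp : memV μ p)
    (hsum : Summable (fun n : ℕ => K ^ n * p n)) :
    Summable (fun n : ℕ => K ^ n * Lop a b p n) ∧
      (∑' n : ℕ, K ^ n * Lop a b p n) ≤
        (K - 1) * K ^ b + (1 - 1 / K) * K ^ a
          - (1 - (μ : ℝ) / b) * (1 - 1 / K) * ∑' n : ℕ, K ^ n * p n := by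
  obtain ⟨hp0, hp1, hmean⟩ := hp
  have hb : 0 < b := by omega
  have hval := hasSum_pow_mul_Lop (a := a) (zero_lt_one.trans hK).ne' hb hsum
  refine ⟨hval.summable, ?_⟩
  rw [hval.tsum_eq]
  linarith [lamr_mul_tail_tsum_le (a := a) hK hb hp0 hp1 hmean hsum,
    lamg_mul_head_sum_le a b hK.le hp0 hp1]

theorem exponential_moment_derivative_bound (a b μ : ℕ) (hau : a < μ) (hub : μ < b)
    (K : ℝ) (hK : 1 < K) (p : ℕ → ℝ) (hp : memV μ p)
    (hsum : Summable (fun n : ℕ => K ^ n * p n)) :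
    Summable (fun n : ℕ => K ^ n * Lop a b p n) ∧
      (∑' n : ℕ, K ^ n * Lop a b p n) ≤
        (K - 1) * K ^ b + (1 - 1 / K) * K ^ a
          - (1 - (μ : ℝ) / b) * (1 - 1 / K) * ∑' n : ℕ, K ^ n * p n :=
  exponential_moment_derivative_bound_general a b μ hub K hK p hp hsum
end

section
/- Let μ be a natural number with μ ≥ 1, and let a, a′ be natural numbers with a ≤ a′ < μ. For c ∈ {a, a′}, let p^{c} denote the geometric-type equilibrium sequence p^{c}_n = 0 for n ≤ c−1 and p^{c}_n = (1/(μ−c+1)) · ((μ−c)/(μ−c+1))^{n−c} for n ≥ c. Then the Gini indices satisfy the comparison G[p^{a′}] ≤ G[p^{a}]. -/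
open scoped BigOperators

/-- The geometric-type equilibrium distribution supported on `{a, a+1, …}`. -/
noncomputable def pgeo (a μ : ℕ) (n : ℕ) : ℝ :=
  if n < a then 0
  else (1 / ((μ : ℝ) - a + 1)) * (((μ : ℝ) - a) / ((μ : ℝ) - a + 1)) ^ (n - a)

/-- The Gini index `G[p] = (1/(2μ)) ∑_{i,j≥0} |i−j| p_i p_j` of a sequence `p`
with mean `μ`. -/
noncomputable def gini (μ : ℕ) (p : ℕ → ℝ) : ℝ :=
  (1 / (2 * (μ : ℝ))) * ∑' ij : ℕ × ℕ, |(ij.1 : ℝ) - (ij.2 : ℝ)| * p ij.1 * p ij.2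

/-!
Shifting a distribution does not change `∑ |i - j| p_i p_j`, and shifting `p^a` to the origin
gives the geometric law `(1 - q) q^n` with `m = μ - a` and `q = m / (m + 1)`. Writing
`|i - j| = (i - j)₊ + (j - i)₊` and summing row by row gives `∑ |i - j| p_i p_j = 2q / (1 - q²)
= 2m(m + 1) / (2m + 1)`, so `G[p^a] = m(m + 1) / ((2m + 1) μ)`, which increases with `m`, that is,
decreases with `a`.
-/

lemma abs_natCast_sub_natCast (i j : ℕ) :
    |(i : ℝ) - j| = ((i - j : ℕ) : ℝ) + ((j - i : ℕ) : ℝ) := by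
  rcases le_total i j with h | h
  · rw [Nat.sub_eq_zero_of_le h, Nat.cast_sub h, abs_of_nonpos (sub_nonpos.2 (Nat.cast_le.2 h))]
    ring
  · rw [Nat.sub_eq_zero_of_le h, Nat.cast_sub h, abs_of_nonneg (sub_nonneg.2 (Nat.cast_le.2 h))]
    ring

section Geometric

variable {q : ℝ}

lemma hasSum_natSub_mul_geometric (hq₀ : 0 ≤ q) (hq₁ : q < 1) (i : ℕ) :
    HasSum (fun j : ℕ => ((j - i : ℕ) : ℝ) * q ^ j) (q ^ i * (q / (1 - q) ^ 2)) := by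
  have hvanish : ∑ j ∈ Finset.range i, ((j - i : ℕ) : ℝ) * q ^ j = 0 :=
    Finset.sum_eq_zero fun j hj => by
      rw [Nat.sub_eq_zero_of_le (Finset.mem_range.1 hj).le, Nat.cast_zero, zero_mul]
  rw [← hasSum_nat_add_iff' i, hvanish, sub_zero]
  refine ((hasSum_coe_mul_geometric_of_norm_lt_one
    (by rwa [Real.norm_eq_abs, abs_of_nonneg hq₀] : ‖q‖ < 1)).mul_left (q ^ i)).congr_fun
    fun j => ?_
  rw [Nat.add_sub_cancel, pow_add]
  ring

lemma hasSum_natSub_mul_geometric_prod (hq₀ : 0 ≤ q) (hq₁ : q < 1) :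
    HasSum (fun ij : ℕ × ℕ => ((ij.2 - ij.1 : ℕ) : ℝ) * q ^ ij.1 * q ^ ij.2)
      (q / ((1 - q) ^ 2 * (1 - q ^ 2))) := by
  have hq2 : q ^ 2 < 1 := by nlinarith
  have hfiber (i : ℕ) : HasSum (fun j : ℕ => ((j - i : ℕ) : ℝ) * q ^ i * q ^ j)
      ((q ^ 2) ^ i * (q / (1 - q) ^ 2)) := by
    rw [show (q ^ 2) ^ i * (q / (1 - q) ^ 2) = q ^ i * (q ^ i * (q / (1 - q) ^ 2)) by ring]
    exact ((hasSum_natSub_mul_geometric hq₀ hq₁ i).mul_left (q ^ i)).congr_fun fun j => by ring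
  have hrows : HasSum (fun i : ℕ => (q ^ 2) ^ i * (q / (1 - q) ^ 2))
      (q / ((1 - q) ^ 2 * (1 - q ^ 2))) := by
    rw [show q / ((1 - q) ^ 2 * (1 - q ^ 2)) = (1 - q ^ 2)⁻¹ * (q / (1 - q) ^ 2) by
      rw [div_mul_eq_div_div_swap]; ring]
    exact (hasSum_geometric_of_lt_one (sq_nonneg q) hq2).mul_right (q / (1 - q) ^ 2)
  have hsummable :
      Summable (fun ij : ℕ × ℕ => ((ij.2 - ij.1 : ℕ) : ℝ) * q ^ ij.1 * q ^ ij.2) :=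
    (summable_prod_of_nonneg fun _ => by positivity).2 ⟨fun i => (hfiber i).summable,
      by simpa only [fun i => (hfiber i).tsum_eq] using hrows.summable⟩
  rw [← (hsummable.hasSum.prod_fiberwise hfiber).unique hrows]
  exact hsummable.hasSum

lemma hasSum_abs_sub_mul_geometric_prod (hq₀ : 0 ≤ q) (hq₁ : q < 1) :
    HasSum (fun ij : ℕ × ℕ => |(ij.1 : ℝ) - ij.2| * q ^ ij.1 * q ^ ij.2)
      (2 * q / ((1 - q) ^ 2 * (1 - q ^ 2))) := by
  have h := hasSum_natSub_mul_geometric_prod hq₀ hq₁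
  rw [mul_div_assoc, two_mul]
  refine (((Equiv.prodComm ℕ ℕ).hasSum_iff.2 h).add h).congr_fun fun ij => ?_
  simp only [Function.comp_apply, Equiv.prodComm_apply, Prod.fst_swap, Prod.snd_swap,
    abs_natCast_sub_natCast]
  ring

end Geometric

lemma tsum_abs_sub_mul_eq_tsum_shift {p : ℕ → ℝ} {a : ℕ} (hp : ∀ n < a, p n = 0) :
    ∑' ij : ℕ × ℕ, |(ij.1 : ℝ) - ij.2| * p ij.1 * p ij.2
      = ∑' ij : ℕ × ℕ, |(ij.1 : ℝ) - ij.2| * p (ij.1 + a) * p (ij.2 + a) := by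
  have hinj : Function.Injective fun ij : ℕ × ℕ => (ij.1 + a, ij.2 + a) := by
    rintro ⟨i, j⟩ ⟨i', j'⟩ h
    simp only [Prod.mk.injEq, Nat.add_right_cancel_iff] at h
    rw [h.1, h.2]
  rw [← hinj.tsum_eq]
  · refine tsum_congr fun ij => ?_
    push_cast
    rw [add_sub_add_right_eq_sub]
  · rintro ⟨i, j⟩ hij
    have hi : a ≤ i := not_lt.1 fun h => hij (by simp [hp i h])
    have hj : a ≤ j := not_lt.1 fun h => hij (by simp [hp j h])
    exact ⟨(i - a, j - a), by simp [Nat.sub_add_cancel hi, Nat.sub_add_cancel hj]⟩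

lemma pgeo_of_lt {a μ n : ℕ} (h : n < a) : pgeo a μ n = 0 := by
  simp [pgeo, h]

lemma pgeo_add (a μ n : ℕ) :
    pgeo a μ (n + a) = 1 / ((μ : ℝ) - a + 1) * (((μ : ℝ) - a) / ((μ : ℝ) - a + 1)) ^ n := by
  simp [pgeo]

lemma gini_pgeo {a μ : ℕ} (ha : a ≤ μ) :
    gini μ (pgeo a μ)
      = ((μ : ℝ) - a) * ((μ : ℝ) - a + 1) / (2 * ((μ : ℝ) - a) + 1) / μ := by
  set m : ℝ := (μ : ℝ) - a
  set q : ℝ := m / (m + 1) with hq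
  have hm₀ : 0 ≤ m := sub_nonneg.2 (Nat.cast_le.2 ha)
  have hq₁ : q < 1 := (div_lt_one (by positivity)).2 (lt_add_one m)
  have hsum :=
    (hasSum_abs_sub_mul_geometric_prod (by positivity) hq₁).mul_left ((1 / (m + 1)) ^ 2)
  rw [gini, tsum_abs_sub_mul_eq_tsum_shift fun _ => pgeo_of_lt]
  simp only [pgeo_add]
  rw [(hsum.congr_fun fun ij => by ring).tsum_eq]
  have hvalue : (1 / (m + 1)) ^ 2 * (2 * q / ((1 - q) ^ 2 * (1 - q ^ 2)))
      = 2 * (m * (m + 1) / (2 * m + 1)) := by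
    have h₁ : m + 1 ≠ 0 := by positivity
    have h₂ : 2 * m + 1 ≠ 0 := by positivity
    rw [hq, show 1 - (m / (m + 1)) ^ 2 = (2 * m + 1) / (m + 1) ^ 2 by field_simp; ring]
    field_simp
    ring
  rw [hvalue]
  ring

lemma mul_add_one_div_two_mul_add_one_le {x y : ℝ} (hx : 0 ≤ x) (hxy : x ≤ y) :
    x * (x + 1) / (2 * x + 1) ≤ y * (y + 1) / (2 * y + 1) := by
  have hy : 0 ≤ y := hx.trans hxy
  rw [div_le_div_iff₀ (by positivity) (by positivity)]
  nlinarith [mul_nonneg (sub_nonneg.2 hxy) (by positivity : 0 ≤ 2 * x * y + x + y + 1)]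

theorem gini_comparison_general (μ a a' : ℕ) (haa' : a ≤ a') (ha' : a' < μ) :
    gini μ (pgeo a' μ) ≤ gini μ (pgeo a μ) := by
  rw [gini_pgeo ha'.le, gini_pgeo (haa'.trans ha'.le)]
  refine div_le_div_of_nonneg_right (mul_add_one_div_two_mul_add_one_le ?_ ?_) (Nat.cast_nonneg μ)
  · exact sub_nonneg.2 (Nat.cast_le.2 ha'.le)
  · exact sub_le_sub_left (Nat.cast_le.2 haa') _

theorem gini_comparison (μ a a' : ℕ) (hμ : 1 ≤ μ) (haa' : a ≤ a') (ha' : a' < μ) :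
    gini μ (pgeo a' μ) ≤ gini μ (pgeo a μ) :=
  gini_comparison_general μ a a' haa' ha'
end
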